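/- Let q ≥ 2 be an integer and let n be a positive integer with n ≤ q² + 2q − 3. Let T = C_{−1/q} = {0, ∞} ∪ {k : k ∈ ℤ, 1 ≤ |k| ≤ q−1} ∪ {1/k : k ∈ ℤ, 1 ≤ |k| ≤ q−1} ∪ {−1/q}. Then any two functions f, g : ℤ² → ℝ that are T-clue-equivalent on I_{n,n} agree at every point of I_{n,n}; equivalently, every solvable n × n RK puzzle with clue slopes T has a unique solution. -/

import Mathlib

open Classical

/-- A slope is an element of `ℚ ∪ {∞}`; `none` denotes `∞`. -/
abbrev Slope := Option ℚ

/-- The clue of `f` along the line of slope `s` (vertical line `x = c` when `s = ∞ = none`,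
and the line `y = r·x + c` when `s = some r`), with respect to the grid
`I_{n,m} = {1,…,n} × {1,…,m} ⊆ ℤ²`: the sum of `f` over the grid points lying on the line. -/
noncomputable def clueSum (n m : ℕ) (s : Slope) (c : ℝ) (f : ℤ × ℤ → ℝ) : ℝ :=
  ∑ p ∈ (Finset.Icc (1 : ℤ) n ×ˢ Finset.Icc (1 : ℤ) m).filter
      (fun p => match s with
        | none => (p.1 : ℝ) = c
        | some r => (p.2 : ℝ) = (r : ℝ) * (p.1 : ℝ) + c),
    f p

/-- `f` and `g` are `T`-clue-equivalent on `I_{n,m}`: for every slope `s ∈ T` and every line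
of slope `s`, the clues of `f` and `g` along that line agree. -/
def ClueEquiv (n m : ℕ) (T : Set Slope) (f g : ℤ × ℤ → ℝ) : Prop :=
  ∀ s ∈ T, ∀ c : ℝ, clueSum n m s c f = clueSum n m s c g

/-- The entry `p ∈ I_{n,m}` is uniquely solvable with respect to the slope set `T`. -/
def UniqSolv (n m : ℕ) (T : Set Slope) (p : ℤ × ℤ) : Prop :=
  ∀ f g : ℤ × ℤ → ℝ, ClueEquiv n m T f g → f p = g p

/-- The slope set `C_{−1/q} = {0, ∞} ∪ {±k, ±1/k : 1 ≤ k ≤ q−1} ∪ {−1/q}`. -/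
def CnegInvQ (q : ℕ) : Set Slope :=
  ({some 0, none} ∪
    {s | ∃ k : ℤ, 1 ≤ |k| ∧ |k| ≤ (q : ℤ) - 1 ∧ (s = some (k : ℚ) ∨ s = some (1 / (k : ℚ)))}) ∪
  {some (-(1 / (q : ℚ)))}

/-!
Put `h := f - g` on the grid and `0` elsewhere; `h` has zero sum along every line whose slope lies
in `C_{−1/q}`. For a primitive direction `d = (b, a)` with `b > 0`, the forward sums
`F p = ∑_{t > 0} h (p + t • d)` satisfy `h p = F (p - d) - F p`. Left of the grid `F` is a full line
sum, hence `0`, so `F` lives in a vertical strip `b` columns narrower than that of `h`. Along any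
direction `e` not parallel to `d`, the line sums of `F` are invariant under translation by `d`,
and since `F` has finite support they vanish. Peeling off pairwise non-parallel directions one at a
time therefore kills `h` as soon as their widths `b` add up to the width `n` of the grid.
The slopes of `C_{−1/q}` supply the directions `(1, a)` for `|a| ≤ q - 1`, `(b, 1)` for
`2 ≤ b ≤ q - 1` and `(b, -1)` for `2 ≤ b ≤ q`, of total width `q² + 2q - 3`.
-/

open Function

namespace RKPuzzle

variable {M : Type*} [AddCommGroup M] {h : ℤ × ℤ → M} {d e p : ℤ × ℤ}

noncomputable def lineSum (h : ℤ × ℤ → M) (d p : ℤ × ℤ) : M := ∑ᶠ t : ℤ, h (p + t • d)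

def SupportedInStrip (h : ℤ × ℤ → M) (X : ℤ) : Prop := ∀ z, h z ≠ 0 → 1 ≤ z.1 ∧ z.1 ≤ X

noncomputable def forwardSum (h : ℤ × ℤ → M) (d p : ℤ × ℤ) : M :=
  ∑ᶠ t ∈ Set.Ioi (0 : ℤ), h (p + t • d)

lemma ne_zero_of_fst_pos (hd : 0 < d.1) : d ≠ 0 := by
  rintro rfl; exact hd.ne rfl

lemma injective_add_smul (hd : d ≠ 0) (p : ℤ × ℤ) : Injective fun t : ℤ => p + t • d :=
  (add_right_injective p).comp (smul_left_injective ℤ hd)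

lemma hasFiniteSupport_comp_add_smul (hh : h.HasFiniteSupport) (hd : d ≠ 0) (p : ℤ × ℤ) :
    (fun t : ℤ => h (p + t • d)).HasFiniteSupport :=
  hh.comp_of_injective (injective_add_smul hd p)

lemma forwardSum_sub_self (hh : h.HasFiniteSupport) (hd : d ≠ 0) (p : ℤ × ℤ) :
    forwardSum h d (p - d) = h p + forwardSum h d p := by
  have hfin := hasFiniteSupport_comp_add_smul hh hd p
  have hIoi : (fun t : ℤ => t - 1) '' Set.Ioi 0 = insert 0 (Set.Ioi 0) := by
    ext t; simp only [Set.image_sub_const_Ioi, Set.mem_Ioi, Set.mem_insert_iff]; omega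
  calc forwardSum h d (p - d) = ∑ᶠ t ∈ Set.Ioi (0 : ℤ), h (p + (t - 1) • d) := by
        simp only [forwardSum, sub_smul, one_smul, add_sub, sub_add_eq_add_sub]
    _ = ∑ᶠ t ∈ insert 0 (Set.Ioi (0 : ℤ)), h (p + t • d) := by
        rw [← hIoi, finsum_mem_image (sub_left_injective.injOn)]
    _ = h p + forwardSum h d p := by
        rw [finsum_mem_insert' _ (by simp) (hfin.subset Set.inter_subset_right), zero_smul,
          add_zero]
        rfl

lemma forwardSum_eq_lineSum {X : ℤ} (hcol : SupportedInStrip h X) (hd : 0 < d.1)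
    (hp : p.1 ≤ 0) : forwardSum h d p = lineSum h d p := by
  rw [forwardSum, lineSum, ← finsum_mem_univ (fun t : ℤ => h (p + t • d))]
  refine finsum_mem_inter_support_eq' (fun t : ℤ => h (p + t • d)) _ _ fun t ht => ?_
  have := (hcol _ ht).1
  simp only [Prod.fst_add, Prod.smul_fst, smul_eq_mul] at this
  simp only [Set.mem_Ioi, Set.mem_univ, iff_true]
  nlinarith

lemma forwardSum_eq_zero {X : ℤ} (hcol : SupportedInStrip h X) (hd : 0 < d.1)
    (hp : X - d.1 < p.1) : forwardSum h d p = 0 := by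
  refine finsum_mem_of_eqOn_zero fun t (ht : 0 < t) => ?_
  by_contra hne
  have := (hcol _ hne).2
  simp only [Prod.fst_add, Prod.smul_fst, smul_eq_mul] at this
  nlinarith

lemma supportedInStrip_forwardSum {X : ℤ} (hcol : SupportedInStrip h X) (hd : 0 < d.1)
    (hline : ∀ p, lineSum h d p = 0) : SupportedInStrip (forwardSum h d) (X - d.1) := by
  intro p hp
  constructor
  · by_contra hlt
    exact hp ((forwardSum_eq_lineSum hcol hd (by omega)).trans (hline p))
  · by_contra hlt
    exact hp (forwardSum_eq_zero hcol hd (by omega))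

lemma hasFiniteSupport_forwardSum {X : ℤ} (hh : h.HasFiniteSupport)
    (hcol : SupportedInStrip h X) (hd : 0 < d.1) (hline : ∀ p, lineSum h d p = 0) :
    (forwardSum h d).HasFiniteSupport := by
  refine ((Finset.Icc 1 X).finite_toSet.biUnion fun t _ =>
    hh.preimage (add_left_injective (t • d)).injOn).subset fun p hp => ?_
  obtain ⟨t, ht, hne⟩ := exists_ne_zero_of_finsum_mem_ne_zero hp
  have hp1 := (supportedInStrip_forwardSum hcol hd hline p hp).1
  have := (hcol _ hne).2
  simp only [Prod.fst_add, Prod.smul_fst, smul_eq_mul] at this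
  simp only [Set.mem_Ioi] at ht
  simp only [Set.mem_iUnion, Finset.coe_Icc, Set.mem_Icc, Set.mem_preimage, mem_support]
  exact ⟨t, ⟨ht, by nlinarith⟩, hne⟩

lemma lineSum_forwardSum_add (hh : h.HasFiniteSupport) (hd : d ≠ 0)
    (hF : (forwardSum h d).HasFiniteSupport) (he : e ≠ 0) (hline_e : ∀ p, lineSum h e p = 0)
    (p : ℤ × ℤ) : lineSum (forwardSum h d) e (p + d) = lineSum (forwardSum h d) e p := by
  have hstep : ∀ t : ℤ, forwardSum h d (p + t • e) - forwardSum h d (p + d + t • e) =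
      h (p + d + t • e) := fun t => by
    have := forwardSum_sub_self hh hd (p + d + t • e)
    rw [show p + d + t • e - d = p + t • e by abel] at this
    rw [this, add_sub_cancel_right]
  have hdiff : lineSum (forwardSum h d) e p - lineSum (forwardSum h d) e (p + d) = 0 := by
    rw [lineSum, lineSum, ← finsum_sub_distrib (hasFiniteSupport_comp_add_smul hF he p)
      (hasFiniteSupport_comp_add_smul hF he (p + d))]
    simp only [hstep]
    exact hline_e (p + d)
  exact (sub_eq_zero.mp hdiff).symm

lemma lineSum_eq_zero_of_periodic {F : ℤ × ℤ → M} (hF : F.HasFiniteSupport)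
    (hde : d.1 * e.2 ≠ d.2 * e.1) (hper : ∀ k : ℕ, lineSum F e (p + k • d) = lineSum F e p) :
    lineSum F e p = 0 := by
  -- `φ` is constant along lines of direction `e` and grows linearly along `d`.
  set φ : ℤ × ℤ → ℤ := fun z => e.2 * z.1 - e.1 * z.2
  have hφ : ∀ (k : ℕ) (t : ℤ), φ (p + k • d + t • e) = φ p + k * (d.1 * e.2 - d.2 * e.1) := by
    intro k t
    simp only [φ, Prod.fst_add, Prod.snd_add, Prod.smul_fst, Prod.smul_snd, smul_eq_mul]
    rw [nsmul_eq_mul, nsmul_eq_mul]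
    ring
  have hinj : Injective fun k : ℕ => φ p + k * (d.1 * e.2 - d.2 * e.1) := fun k l hkl => by
    simpa using mul_right_cancel₀ (sub_ne_zero.mpr hde) (add_left_cancel hkl)
  obtain ⟨k, hk⟩ := ((hF.image φ).preimage hinj.injOn).exists_notMem
  rw [← hper k, lineSum]
  refine finsum_eq_zero_of_forall_eq_zero fun t => ?_
  by_contra hne
  exact hk ⟨_, hne, hφ k t⟩

lemma lineSum_forwardSum_eq_zero (hh : h.HasFiniteSupport) (hd : d ≠ 0)
    (hF : (forwardSum h d).HasFiniteSupport) (he : e ≠ 0) (hline_e : ∀ p, lineSum h e p = 0)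
    (hde : d.1 * e.2 ≠ d.2 * e.1) (p : ℤ × ℤ) : lineSum (forwardSum h d) e p = 0 := by
  refine lineSum_eq_zero_of_periodic hF hde fun k => ?_
  induction k with
  | zero => rw [zero_smul, add_zero]
  | succ k ih => rw [succ_nsmul, ← add_assoc, lineSum_forwardSum_add hh hd hF he hline_e, ih]

theorem eq_zero_of_lineSum_eq_zero (D : Finset (ℤ × ℤ)) (hD : ∀ d ∈ D, 0 < d.1)
    (hpar : (D : Set (ℤ × ℤ)).Pairwise fun d e => d.1 * e.2 ≠ d.2 * e.1) {X : ℤ}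
    (hX : X ≤ ∑ d ∈ D, d.1) (hh : h.HasFiniteSupport) (hcol : SupportedInStrip h X)
    (hline : ∀ d ∈ D, ∀ p, lineSum h d p = 0) : h = 0 := by
  induction D using Finset.induction_on generalizing X h with
  | empty =>
    ext z
    by_contra hz
    have := hcol z hz
    simp only [Finset.sum_empty] at hX
    omega
  | insert d D hdD ih =>
    rw [Finset.coe_insert, Set.pairwise_insert] at hpar
    rw [Finset.sum_insert hdD] at hX
    have hd := hD d (Finset.mem_insert_self d D)
    have hline_d := hline d (Finset.mem_insert_self d D)
    have hF := hasFiniteSupport_forwardSum hh hcol hd hline_d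
    have hF_zero : forwardSum h d = 0 :=
      ih (fun e he => hD e (Finset.mem_insert_of_mem he)) hpar.1 (X := X - d.1) (by omega) hF
        (supportedInStrip_forwardSum hcol hd hline_d)
        fun e he => lineSum_forwardSum_eq_zero hh (ne_zero_of_fst_pos hd) hF
          (ne_zero_of_fst_pos (hD e (Finset.mem_insert_of_mem he)))
          (hline e (Finset.mem_insert_of_mem he)) (hpar.2 e he (by rintro rfl; exact hdD he)).1
    ext z
    simpa [hF_zero, eq_comm] using forwardSum_sub_self hh (ne_zero_of_fst_pos hd) z

lemma mem_range_add_smul_iff (hd : d.1 ≠ 0) (hcop : IsCoprime d.1 d.2) {z : ℤ × ℤ} :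
    z ∈ Set.range (fun t : ℤ => p + t • d) ↔ d.1 * (z.2 - p.2) = d.2 * (z.1 - p.1) := by
  constructor
  · rintro ⟨t, rfl⟩
    simp only [Prod.fst_add, Prod.snd_add, Prod.smul_fst, Prod.smul_snd, smul_eq_mul]
    ring
  · intro hz
    obtain ⟨t, ht⟩ := hcop.dvd_of_dvd_mul_left ⟨_, hz.symm⟩
    have h2 : z.2 - p.2 = t * d.2 := mul_left_cancel₀ hd (by rw [hz, ht]; ring)
    refine ⟨t, Prod.ext ?_ ?_⟩ <;>
      simp only [Prod.fst_add, Prod.snd_add, Prod.smul_fst, Prod.smul_snd, smul_eq_mul] <;>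
      linarith

lemma snd_eq_slope_mul_add_iff (hd : d.1 ≠ 0) {z : ℤ × ℤ} :
    (z.2 : ℝ) = (((d.2 : ℚ) / d.1 : ℚ) : ℝ) * z.1 + (p.2 - (((d.2 : ℚ) / d.1 : ℚ) : ℝ) * p.1) ↔
      d.1 * (z.2 - p.2) = d.2 * (z.1 - p.1) := by
  have hd' : (d.1 : ℝ) ≠ 0 := Int.cast_ne_zero.mpr hd
  rw [← Int.cast_inj (α := ℝ)]
  push_cast
  constructor <;> intro h <;> field_simp at * <;> linarith

noncomputable def grid (n m : ℕ) : Finset (ℤ × ℤ) := Finset.Icc (1 : ℤ) n ×ˢ Finset.Icc (1 : ℤ) m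

lemma mem_grid {n m : ℕ} {z : ℤ × ℤ} :
    z ∈ grid n m ↔ 1 ≤ z.1 ∧ z.1 ≤ n ∧ 1 ≤ z.2 ∧ z.2 ≤ m := by
  simp only [grid, Finset.mem_product, Finset.mem_Icc, and_assoc]

theorem lineSum_indicator_sub_eq_zero {n m : ℕ} {T : Set Slope} {f g : ℤ × ℤ → ℝ}
    (hfg : ClueEquiv n m T f g) (hd : 0 < d.1) (hcop : IsCoprime d.1 d.2)
    (hT : some ((d.2 : ℚ) / d.1) ∈ T) (p : ℤ × ℤ) :
    lineSum ((grid n m : Set (ℤ × ℤ)).indicator (f - g)) d p = 0 := by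
  set r : ℚ := (d.2 : ℚ) / d.1
  set c : ℝ := p.2 - r * p.1
  set onLine := (grid n m).filter fun z => (z.2 : ℝ) = r * z.1 + c
  have hclue : ∑ z ∈ onLine, (f - g) z = 0 := by
    simp only [Pi.sub_apply]
    rw [Finset.sum_sub_distrib, sub_eq_zero]
    exact hfg (some r) hT c
  set H := (grid n m : Set (ℤ × ℤ)).indicator (f - g) with hH
  have hsupp : Set.range (fun t : ℤ => p + t • d) ∩ support H = ↑onLine ∩ support H := by
    ext z
    simp only [hH, Set.support_indicator, Set.mem_inter_iff, onLine, Finset.mem_coe,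
      Finset.mem_filter, mem_range_add_smul_iff hd.ne' hcop, snd_eq_slope_mul_add_iff hd.ne' (p := p), r, c]
    tauto
  rw [lineSum, ← finsum_mem_range (injective_add_smul (ne_zero_of_fst_pos hd) p),
    finsum_mem_eq_sum_of_inter_support_eq _ hsupp, ← hclue]
  exact Finset.sum_congr rfl fun z hz =>
    Set.indicator_of_mem (Finset.mem_coe.mpr (Finset.mem_filter.mp hz).1) _

lemma eq_of_mul_eq_mul_of_isCoprime (hd : 0 < d.1) (he : 0 < e.1) (hd' : IsCoprime d.1 d.2)
    (he' : IsCoprime e.1 e.2) (hde : d.1 * e.2 = d.2 * e.1) : d = e := by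
  have h1 : d.1 = e.1 := Int.dvd_antisymm hd.le he.le
    (hd'.dvd_of_dvd_mul_left ⟨e.2, hde.symm⟩)
    (he'.dvd_of_dvd_mul_left ⟨d.2, by linarith⟩)
  exact Prod.ext h1 (mul_left_cancel₀ hd.ne' (by rw [hde, h1, mul_comm]))

lemma two_mul_sum_Icc_two (m : ℤ) (hm : 1 ≤ m) :
    2 * ∑ b ∈ Finset.Icc 2 m, b = m * (m + 1) - 2 := by
  induction m, hm using Int.leInduction with
  | base => rfl
  | succ m hm ih =>
    rw [← Finset.insert_Icc_right_eq_Icc_add_one (by omega),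
      Finset.sum_insert (by simp), mul_add, ih]
    ring

noncomputable def dirsCnegInvQ (q : ℕ) : Finset (ℤ × ℤ) :=
  (Finset.Icc (1 - q : ℤ) (q - 1)).image (fun a => (1, a)) ∪
    (Finset.Icc (2 : ℤ) (q - 1)).image (fun b => (b, 1)) ∪
    (Finset.Icc (2 : ℤ) q).image (fun b => (b, -1))

lemma mem_dirsCnegInvQ {q : ℕ} {d : ℤ × ℤ} : d ∈ dirsCnegInvQ q ↔
    (d.1 = 1 ∧ 1 - q ≤ d.2 ∧ d.2 ≤ q - 1) ∨ (2 ≤ d.1 ∧ d.1 ≤ q - 1 ∧ d.2 = 1) ∨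
      (2 ≤ d.1 ∧ d.1 ≤ q ∧ d.2 = -1) := by
  obtain ⟨d₁, d₂⟩ := d
  simp only [dirsCnegInvQ, Finset.mem_union, Finset.mem_image, Finset.mem_Icc, Prod.mk.injEq]
  constructor
  · rintro ((⟨a, ha, rfl, rfl⟩ | ⟨b, hb, rfl, rfl⟩) | ⟨b, hb, rfl, rfl⟩) <;> simp_all
  · rintro (⟨rfl, h⟩ | ⟨h₁, h₂, rfl⟩ | ⟨h₁, h₂, rfl⟩) <;> simp_all

lemma sum_fst_dirsCnegInvQ {q : ℕ} (hq : 2 ≤ q) :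
    ∑ d ∈ dirsCnegInvQ q, d.1 = (q : ℤ) ^ 2 + 2 * q - 3 := by
  rw [dirsCnegInvQ, Finset.sum_union, Finset.sum_union, Finset.sum_image, Finset.sum_image,
    Finset.sum_image]
  · have h₁ := two_mul_sum_Icc_two (q - 1) (by omega)
    have h₂ := two_mul_sum_Icc_two q (by omega)
    rw [Finset.sum_const, Int.card_Icc, nsmul_one, Int.toNat_of_nonneg (by omega)]
    linarith
  all_goals first
    | exact fun a _ b _ hab => by simpa using hab
    | exact Finset.disjoint_left.mpr fun d hd hd' => by
        simp only [Finset.mem_union, Finset.mem_image, Finset.mem_Icc] at hd hd'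
        grind

lemma fst_pos_of_mem_dirsCnegInvQ {q : ℕ} {d : ℤ × ℤ} (hd : d ∈ dirsCnegInvQ q) : 0 < d.1 := by
  rcases mem_dirsCnegInvQ.mp hd with h | h | h <;> omega

lemma isCoprime_of_mem_dirsCnegInvQ {q : ℕ} {d : ℤ × ℤ} (hd : d ∈ dirsCnegInvQ q) :
    IsCoprime d.1 d.2 := by
  rcases mem_dirsCnegInvQ.mp hd with ⟨h, -⟩ | ⟨-, -, h⟩ | ⟨-, -, h⟩ <;> rw [h]
  exacts [isCoprime_one_left, isCoprime_one_right, isCoprime_one_right.neg_right]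

lemma slope_mem_CnegInvQ {q : ℕ} {d : ℤ × ℤ} (hd : d ∈ dirsCnegInvQ q) :
    some ((d.2 : ℚ) / d.1) ∈ CnegInvQ q := by
  simp only [CnegInvQ, Set.mem_union, Set.mem_insert_iff, Set.mem_singleton_iff,
    Set.mem_ofPred_eq, Option.some.injEq, reduceCtorEq, or_false]
  rcases mem_dirsCnegInvQ.mp hd with ⟨h₁, h₂, h₃⟩ | ⟨h₁, h₂, h₃⟩ | ⟨h₁, h₂, h₃⟩
  · rcases eq_or_ne d.2 0 with h₀ | h₀
    · simp [h₀]
    · exact Or.inl (Or.inr ⟨d.2, Int.one_le_abs h₀, abs_le.mpr ⟨by omega, h₃⟩,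
        Or.inl (by simp [h₁])⟩)
  · exact Or.inl (Or.inr ⟨d.1, by rw [abs_of_pos (by omega)]; omega,
      by rw [abs_of_pos (by omega)]; omega, Or.inr (by simp [h₃])⟩)
  · rcases eq_or_lt_of_le h₂ with h₄ | h₄
    · exact Or.inr (by rw [h₃, h₄]; push_cast; ring)
    · exact Or.inl (Or.inr ⟨-d.1, by rw [abs_of_neg (by omega)]; omega,
        by rw [abs_of_neg (by omega)]; omega,
        Or.inr (by rw [h₃]; push_cast; rw [div_neg, neg_div])⟩)

lemma pairwise_dirsCnegInvQ (q : ℕ) :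
    (dirsCnegInvQ q : Set (ℤ × ℤ)).Pairwise fun d e => d.1 * e.2 ≠ d.2 * e.1 :=
  fun _ hd _ he hne hde => hne <| eq_of_mul_eq_mul_of_isCoprime (fst_pos_of_mem_dirsCnegInvQ hd)
    (fst_pos_of_mem_dirsCnegInvQ he) (isCoprime_of_mem_dirsCnegInvQ hd)
    (isCoprime_of_mem_dirsCnegInvQ he) hde

end RKPuzzle

open RKPuzzle

theorem rk_unique_CnegInvQ_general (q : ℕ) (hq : 2 ≤ q) (n : ℕ)
    (hnq : n ≤ q ^ 2 + 2 * q - 3) :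
    ∀ f g : ℤ × ℤ → ℝ, ClueEquiv n n (CnegInvQ q) f g →
      ∀ p : ℤ × ℤ, 1 ≤ p.1 → p.1 ≤ (n : ℤ) → 1 ≤ p.2 → p.2 ≤ (n : ℤ) → f p = g p := by
  intro f g hfg p hp₁ hp₂ hp₃ hp₄
  have hwidth : (n : ℤ) ≤ ∑ d ∈ dirsCnegInvQ q, d.1 := by
    have : 3 ≤ q ^ 2 + 2 * q := by nlinarith
    zify [this] at hnq
    rwa [sum_fst_dirsCnegInvQ hq]
  have hzero : (grid n n : Set (ℤ × ℤ)).indicator (f - g) = 0 :=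
    eq_zero_of_lineSum_eq_zero (dirsCnegInvQ q) (fun _ => fst_pos_of_mem_dirsCnegInvQ)
      (pairwise_dirsCnegInvQ q) hwidth
      ((grid n n).finite_toSet.subset Set.support_indicator_subset)
      (fun z hz => by have := mem_grid.mp (Set.mem_of_indicator_ne_zero hz); omega)
      fun d hd => lineSum_indicator_sub_eq_zero hfg (fst_pos_of_mem_dirsCnegInvQ hd)
        (isCoprime_of_mem_dirsCnegInvQ hd) (slope_mem_CnegInvQ hd)
  have hp : p ∈ (grid n n : Set (ℤ × ℤ)) := mem_grid.mpr ⟨hp₁, hp₂, hp₃, hp₄⟩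
  simpa [Set.indicator_of_mem hp, sub_eq_zero] using congrFun hzero p

/-- if `q ≥ 2` and `n ≤ q² + 2q − 3`, then every entry of `I_{n,n}` is
uniquely solvable with respect to `C_{−1/q}`; equivalently every solvable `n × n` RK puzzle
with clue slopes `C_{−1/q}` has a unique solution. -/
theorem rk_unique_CnegInvQ (q : ℕ) (hq : 2 ≤ q) (n : ℕ) (hn : 0 < n)
    (hnq : n ≤ q ^ 2 + 2 * q - 3) :
    ∀ f g : ℤ × ℤ → ℝ, ClueEquiv n n (CnegInvQ q) f g →
      ∀ p : ℤ × ℤ, 1 ≤ p.1 → p.1 ≤ (n : ℤ) → 1 ≤ p.2 → p.2 ≤ (n : ℤ) → f p = g p :=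
  rk_unique_CnegInvQ_general q hq n hnq
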